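/- arXiv:1703.01266 — 2 statements merged into one kernel-verified Lean document; each statement's English description precedes it below -/
import Mathlib

section
/- For every density matrix ρ on ℂ^d with d ≥ 2, the coherence weight dominates the rescaled robustness of coherence: C_w(ρ) ≥ C_R(ρ)/(d−1). (Here one uses that C_R(τ) ≤ d−1 for every density matrix τ on ℂ^d.) -/
/-!
If `ρ = (1 - s) σ + s τ` with `σ` diagonal, then `ρ + s (1 - τ) = (1 - s) σ + s 1` is diagonal.
The eigenvalues of a state lie in `[0, 1]`, so `1 - τ` is positive semidefinite of trace `d - 1`,
and `(1 - τ) / (d - 1)` is a state; mixing it into `ρ` with weight `s (d - 1)` removes all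
coherence, whence `C_R(ρ) ≤ (d - 1) s`.
-/

open Matrix BigOperators
open scoped ComplexOrder

noncomputable section

/-- A density matrix: positive semidefinite with unit trace. -/
def IsDensity {n : Type*} [Fintype n] (ρ : Matrix n n ℂ) : Prop :=
  ρ.PosSemidef ∧ ρ.trace = 1

/-- A matrix is incoherent if it is diagonal in the fixed (standard) basis. -/
def IsIncoherent {n : Type*} (σ : Matrix n n ℂ) : Prop :=
  ∀ i j, i ≠ j → σ i j = 0

/-- The coherence weight of a state `ρ`. -/
noncomputable def cohWeight {n : Type*} [Fintype n] (ρ : Matrix n n ℂ) : ℝ :=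
  sInf {s : ℝ | s ∈ Set.Icc (0 : ℝ) 1 ∧
    ∃ σ τ : Matrix n n ℂ,
      IsDensity σ ∧ IsIncoherent σ ∧ IsDensity τ ∧
      ρ = (1 - s) • σ + s • τ}

/-- The robustness of coherence. -/
noncomputable def cohRobustness {n : Type*} [Fintype n] (ρ : Matrix n n ℂ) : ℝ :=
  sInf {s : ℝ | 0 ≤ s ∧ ∃ τ : Matrix n n ℂ, IsDensity τ ∧
    IsIncoherent ((1 + s)⁻¹ • (ρ + s • τ))}

/-- The `l₁` norm of coherence: sum of absolute values of off-diagonal entries. -/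
noncomputable def Cl1 {n : Type*} [Fintype n] [DecidableEq n] (ρ : Matrix n n ℂ) : ℝ :=
  ∑ i : n, ∑ j : n, if i = j then 0 else ‖ρ i j‖

namespace IsIncoherent

variable {n : Type*} {σ σ' : Matrix n n ℂ}

lemma add (hσ : IsIncoherent σ) (hσ' : IsIncoherent σ') : IsIncoherent (σ + σ') :=
  fun i j hij => by simp [hσ i j hij, hσ' i j hij]

lemma smul {R : Type*} [SMulZeroClass R ℂ] (hσ : IsIncoherent σ) (c : R) :
    IsIncoherent (c • σ) :=
  fun i j hij => by simp [hσ i j hij]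

end IsIncoherent

lemma isIncoherent_one {n : Type*} [DecidableEq n] : IsIncoherent (1 : Matrix n n ℂ) :=
  fun _ _ => one_apply_ne

namespace IsDensity

variable {n : Type*} [Fintype n] [DecidableEq n] {τ : Matrix n n ℂ}

lemma sum_eigenvalues (hτ : IsDensity τ) : ∑ i, hτ.1.1.eigenvalues i = 1 := by
  have h : ((∑ i, hτ.1.1.eigenvalues i : ℝ) : ℂ) = 1 := by
    push_cast
    exact hτ.1.1.trace_eq_sum_eigenvalues.symm.trans hτ.2
  exact_mod_cast h

lemma eigenvalues_le_one (hτ : IsDensity τ) (i : n) : hτ.1.1.eigenvalues i ≤ 1 :=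
  hτ.sum_eigenvalues ▸
    Finset.single_le_sum (fun j _ => hτ.1.eigenvalues_nonneg j) (Finset.mem_univ i)

open scoped MatrixOrder in
lemma posSemidef_one_sub (hτ : IsDensity τ) : (1 - τ).PosSemidef := by
  have hle : τ ≤ algebraMap ℝ (Matrix n n ℂ) 1 :=
    le_algebraMap_of_spectrum_le (fun x hx => by
      obtain ⟨i, rfl⟩ := hτ.1.1.spectrum_real_eq_range_eigenvalues ▸ hx
      exact hτ.eigenvalues_le_one i) hτ.1.1.isSelfAdjoint
  simpa [Matrix.le_iff] using hle

end IsDensity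

lemma isDensity_inv_smul {n : Type*} [Fintype n] {A : Matrix n n ℂ} (hA : A.PosSemidef) {c : ℝ}
    (hc : 0 < c) (htr : A.trace = c) : IsDensity (c⁻¹ • A) := by
  refine ⟨hA.smul (inv_nonneg.mpr hc.le), ?_⟩
  rw [trace_smul, htr, Complex.real_smul, Complex.ofReal_inv,
    inv_mul_cancel₀ (Complex.ofReal_ne_zero.mpr hc.ne')]

section

variable {n : Type*} [Fintype n] [DecidableEq n]

lemma isDensity_maximallyMixed [Nonempty n] :
    IsDensity ((Fintype.card n : ℝ)⁻¹ • (1 : Matrix n n ℂ)) :=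
  isDensity_inv_smul PosSemidef.one (by exact_mod_cast Fintype.card_pos) (by simp)

lemma IsDensity.isDensity_complement (hn : 1 < Fintype.card n) {τ : Matrix n n ℂ}
    (hτ : IsDensity τ) : IsDensity (((Fintype.card n : ℝ) - 1)⁻¹ • (1 - τ)) :=
  isDensity_inv_smul hτ.posSemidef_one_sub (sub_pos.mpr (Nat.one_lt_cast.mpr hn))
    (by simp [trace_sub, hτ.2])

end

lemma cohRobustness_le {n : Type*} [Fintype n] {ρ τ : Matrix n n ℂ} {s : ℝ} (hs : 0 ≤ s)
    (hτ : IsDensity τ) (hinc : IsIncoherent ((1 + s)⁻¹ • (ρ + s • τ))) :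
    cohRobustness ρ ≤ s :=
  csInf_le ⟨0, fun _ ht => ht.1⟩ ⟨hs, τ, hτ, hinc⟩

lemma le_cohWeight {n : Type*} [Fintype n] [DecidableEq n] [Nonempty n] {ρ : Matrix n n ℂ}
    (hρ : IsDensity ρ) {c : ℝ}
    (h : ∀ s ∈ Set.Icc (0 : ℝ) 1, ∀ σ τ : Matrix n n ℂ, IsDensity σ → IsIncoherent σ →
      IsDensity τ → ρ = (1 - s) • σ + s • τ → c ≤ s) :
    c ≤ cohWeight ρ :=
  le_csInf ⟨1, by simp, _, ρ, isDensity_maximallyMixed, isIncoherent_one.smul _, hρ, by simp⟩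
    fun _ ⟨hs, σ, τ, hσ, hσinc, hτ, hdec⟩ => h _ hs σ τ hσ hσinc hτ hdec

lemma cohRobustness_le_mul_of_decomposition {n : Type*} [Fintype n] [DecidableEq n]
    (hn : 1 < Fintype.card n) {ρ σ τ : Matrix n n ℂ} {s : ℝ} (hs : 0 ≤ s)
    (hσ : IsIncoherent σ) (hτ : IsDensity τ) (hρ : ρ = (1 - s) • σ + s • τ) :
    cohRobustness ρ ≤ s * ((Fintype.card n : ℝ) - 1) := by
  have hd : 0 < (Fintype.card n : ℝ) - 1 := sub_pos.mpr (Nat.one_lt_cast.mpr hn)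
  refine cohRobustness_le (mul_nonneg hs hd.le) (hτ.isDensity_complement hn) ?_
  have hmix : ρ + (s * ((Fintype.card n : ℝ) - 1)) • (((Fintype.card n : ℝ) - 1)⁻¹ • (1 - τ)) =
      (1 - s) • σ + s • (1 : Matrix n n ℂ) := by
    rw [hρ, smul_smul, mul_assoc, mul_inv_cancel₀ hd.ne', mul_one, smul_sub]
    abel
  rw [hmix]
  exact ((hσ.smul _).add (isIncoherent_one.smul _)).smul _

theorem cohWeight_ge_robustness_div {d : ℕ} (hd : 2 ≤ d)
    (ρ : Matrix (Fin d) (Fin d) ℂ) (hρ : IsDensity ρ) :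
    cohWeight ρ ≥ cohRobustness ρ / ((d : ℝ) - 1) := by
  have hcard : 1 < Fintype.card (Fin d) := by rw [Fintype.card_fin]; omega
  have hd' : 0 < (d : ℝ) - 1 := sub_pos.mpr (Nat.one_lt_cast.mpr hd)
  have : NeZero d := ⟨by omega⟩
  refine le_cohWeight hρ fun s hs σ τ _ hσ hτ hdec => ?_
  rw [div_le_iff₀ hd']
  simpa using cohRobustness_le_mul_of_decomposition hcard hs.1 hσ hτ hdec
end
end

section
/- For every density matrix ρ on ℂ^d with d ≥ 2, the coherence weight dominates the rescaled l₁ norm of coherence: C_w(ρ) ≥ C_{l₁}(ρ)/(d−1). (Here one uses that C_{l₁}(τ) ≤ d−1 for every density matrix τ on ℂ^d.) -/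
/-! If `ρ = (1 - s) • σ + s • τ` with `σ` diagonal, the off-diagonal entries of `ρ` are `s` times
those of `τ`, so `Cl1 ρ = s * Cl1 τ`. For a state `τ`, nonnegativity of the `2 × 2` principal
minors gives `2 ‖τ i j‖ ≤ τ i i + τ j j`, and summing over `i ≠ j` yields `Cl1 τ ≤ d - 1`.
Hence every admissible `s` is at least `Cl1 ρ / (d - 1)`, and `s = 1` is always admissible
(with `σ` the diagonal part of `ρ`). -/

open Matrix BigOperators
open scoped ComplexOrder

noncomputable section

namespace Matrix.PosSemidef

variable {n : Type*} {M : Matrix n n ℂ}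

theorem norm_apply_sq_le (hM : M.PosSemidef) (i j : n) :
    ‖M i j‖ ^ 2 ≤ (M i i).re * (M j j).re := by
  have hdet := (hM.submatrix ![i, j]).det_nonneg
  rw [det_fin_two] at hdet
  simp only [submatrix_apply, Matrix.cons_val_zero, Matrix.cons_val_one] at hdet
  rw [← hM.1.apply j i, ← hM.1.coe_re_apply_self i, ← hM.1.coe_re_apply_self j,
    RCLike.star_def, RCLike.mul_conj, Complex.le_def] at hdet
  simpa [sub_nonneg, ← Complex.ofReal_pow] using hdet.1

theorem two_mul_norm_apply_le (hM : M.PosSemidef) (i j : n) :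
    2 * ‖M i j‖ ≤ (M i i).re + (M j j).re := by
  have hi : 0 ≤ (M i i).re := Complex.nonneg_iff.1 hM.diag_nonneg |>.1
  have hj : 0 ≤ (M j j).re := Complex.nonneg_iff.1 hM.diag_nonneg |>.1
  nlinarith [hM.norm_apply_sq_le i j, sq_nonneg ((M i i).re - (M j j).re), norm_nonneg (M i j)]

end Matrix.PosSemidef

theorem IsDensity.sum_re_diag {n : Type*} [Fintype n] {ρ : Matrix n n ℂ} (hρ : IsDensity ρ) :
    ∑ i, (ρ i i).re = 1 := by
  simpa [trace, Complex.re_sum] using congrArg Complex.re hρ.2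

section Cl1

variable {n : Type*} [Fintype n] [DecidableEq n]

theorem Cl1_nonneg (ρ : Matrix n n ℂ) : 0 ≤ Cl1 ρ :=
  Finset.sum_nonneg fun _ _ ↦ Finset.sum_nonneg fun _ _ ↦ by split_ifs <;> positivity

theorem Cl1_smul (c : ℝ) (ρ : Matrix n n ℂ) : Cl1 (c • ρ) = |c| * Cl1 ρ := by
  simp only [Cl1, Finset.mul_sum, mul_ite, mul_zero, Matrix.smul_apply, norm_smul,
    Real.norm_eq_abs]

theorem Cl1_add_of_isIncoherent {σ : Matrix n n ℂ} (hσ : IsIncoherent σ) (ρ : Matrix n n ℂ) :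
    Cl1 (σ + ρ) = Cl1 ρ := by
  refine Finset.sum_congr rfl fun i _ ↦ Finset.sum_congr rfl fun j _ ↦ ?_
  split_ifs with hij
  · rfl
  · rw [Matrix.add_apply, hσ i j hij, zero_add]

theorem IsDensity.Cl1_le {ρ : Matrix n n ℂ} (hρ : IsDensity ρ) :
    Cl1 ρ ≤ Fintype.card n - 1 := by
  set r : n → ℝ := fun i ↦ (ρ i i).re
  have hr : ∑ i, r i = 1 := hρ.sum_re_diag
  have hentry : ∀ i j,
      (if i = j then 0 else ‖ρ i j‖) ≤ (r i + r j) / 2 - if i = j then r i else 0 := by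
    intro i j
    split_ifs with hij
    · subst hij; linarith
    · linarith [hρ.1.two_mul_norm_apply_le i j]
  calc Cl1 ρ ≤ ∑ i, ∑ j, ((r i + r j) / 2 - if i = j then r i else 0) :=
        Finset.sum_le_sum fun i _ ↦ Finset.sum_le_sum fun j _ ↦ hentry i j
    _ = Fintype.card n - 1 := by
        simp only [Finset.sum_sub_distrib, Finset.sum_ite_eq, Finset.mem_univ, if_true,
          ← Finset.sum_div, Finset.sum_add_distrib, Finset.sum_const, hr, Finset.card_univ,
          nsmul_eq_mul, ← Finset.mul_sum]
        ring

end Cl1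

theorem isIncoherent_diagonal {n : Type*} [DecidableEq n] (d : n → ℂ) :
    IsIncoherent (diagonal d) :=
  fun _ _ hij ↦ diagonal_apply_ne d hij

theorem IsIncoherent.smul_s12 {n : Type*} {σ : Matrix n n ℂ} (hσ : IsIncoherent σ) (c : ℝ) :
    IsIncoherent (c • σ) :=
  fun i j hij ↦ by rw [Matrix.smul_apply, hσ i j hij, smul_zero]

theorem IsDensity.diagonal_diag {n : Type*} [Fintype n] [DecidableEq n] {ρ : Matrix n n ℂ}
    (hρ : IsDensity ρ) : IsDensity (diagonal ρ.diag) :=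
  ⟨PosSemidef.diagonal fun _ ↦ hρ.1.diag_nonneg, by rw [trace_diagonal]; exact hρ.2⟩

theorem cohWeight_nonneg {n : Type*} [Fintype n] (ρ : Matrix n n ℂ) : 0 ≤ cohWeight ρ :=
  Real.sInf_nonneg fun _ hs ↦ hs.1.1

theorem IsDensity.Cl1_div_card_sub_one_le_cohWeight {n : Type*} [Fintype n] [DecidableEq n]
    {ρ : Matrix n n ℂ} (hρ : IsDensity ρ) : Cl1 ρ / (Fintype.card n - 1) ≤ cohWeight ρ := by
  rcases le_or_gt ((Fintype.card n : ℝ) - 1) 0 with hn | hn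
  · exact (div_nonpos_of_nonneg_of_nonpos (Cl1_nonneg ρ) hn).trans (cohWeight_nonneg ρ)
  refine le_csInf
    ⟨1, ⟨by norm_num, _, ρ, hρ.diagonal_diag, isIncoherent_diagonal _, hρ, by simp⟩⟩ ?_
  rintro s ⟨⟨hs0, -⟩, σ, τ, -, hσ, hτ, rfl⟩
  rw [div_le_iff₀ hn, Cl1_add_of_isIncoherent (hσ.smul_s12 _), Cl1_smul, abs_of_nonneg hs0]
  exact mul_le_mul_of_nonneg_left hτ.Cl1_le hs0

theorem cohWeight_ge_l1_div_general {d : ℕ}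
    (ρ : Matrix (Fin d) (Fin d) ℂ) (hρ : IsDensity ρ) :
    cohWeight ρ ≥ Cl1 ρ / ((d : ℝ) - 1) := by
  simpa only [Fintype.card_fin] using hρ.Cl1_div_card_sub_one_le_cohWeight

theorem cohWeight_ge_l1_div {d : ℕ} (hd : 2 ≤ d)
    (ρ : Matrix (Fin d) (Fin d) ℂ) (hρ : IsDensity ρ) :
    cohWeight ρ ≥ Cl1 ρ / ((d : ℝ) - 1) :=
  cohWeight_ge_l1_div_general ρ hρ
end
end
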